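/- arXiv:1609.07525 — 4 statements merged into one kernel-verified Lean document; each statement's English description precedes it below -/
import Mathlib

section
/- For a bijection π: I → J between two k-element subsets I, J of [n] with π(i) = i for all i ∈ I ∩ J, the parity of the number of crossings of π equals the parity of inv(π) plus the sum over i ∈ I of s_{i,π(i)}, i.e. (-1)^{xing(π)} = (-1)^{inv(π)} · ∏_{i∈I} (-1)^{s_{i,π(i)}}. -/
/-!
Both sides are products of signs over the pairs `i₁ < i₂` of `I`. The sign of `σ` counts the
pairs inverted by `π`, and `(-1)^{s_{i,π(i)}} = ∏_{j ∈ I} (-1)^{[j strictly between i and π(i)]}`,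
so grouping `(i₁, i₂)` with `(i₂, i₁)` also yields one factor per pair. For a single pair the
identity is a finite check on the relative order of `i₁, i₂, π(i₁), π(i₂)`; the degenerate
coincidences `π(i₁) = i₂`, `π(i₂) = i₁` are excluded because `π` fixes `I ∩ J`.
-/

/-- The number of elements of `I` strictly between `i` and `j`. -/
def sBetween (I : Finset ℕ) (i j : ℕ) : ℕ :=
  (I.filter fun x => min i j < x ∧ x < max i j).card

/-- The number of crossings of the bijection `π : I → J`:
pairs `(i₁, i₂) ∈ I × I` with `i₁ < i₂` and
`(i₁ − π(i₂))(π(i₂) − π(i₁))(π(i₁) − i₂)(i₂ − i₁) < 0`. -/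
def xingCount (I : Finset ℕ) (π : ℕ → ℕ) : ℕ :=
  ((I ×ˢ I).filter fun p =>
    p.1 < p.2 ∧
      ((p.1 : ℤ) - (π p.2 : ℤ)) * ((π p.2 : ℤ) - (π p.1 : ℤ)) *
          ((π p.1 : ℤ) - (p.2 : ℤ)) * ((p.2 : ℤ) - (p.1 : ℤ)) < 0).card

open Finset Equiv

section LtPairs

variable {α β : Type*} [LinearOrder α]

def ltPairs (s : Finset α) : Finset (α × α) :=
  (s ×ˢ s).filter fun p => p.1 < p.2

variable {s : Finset α} {p : α × α}

theorem mem_ltPairs : p ∈ ltPairs s ↔ p.1 ∈ s ∧ p.2 ∈ s ∧ p.1 < p.2 := by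
  simp [ltPairs, and_assoc]

theorem prod_product_self_eq_prod_ltPairs [CommMonoid β] (F : α × α → β)
    (hdiag : ∀ a ∈ s, F (a, a) = 1) :
    ∏ p ∈ s ×ˢ s, F p = ∏ p ∈ ltPairs s, F p * F p.swap := by
  have hgt : ∏ p ∈ s ×ˢ s with ¬p.1 < p.2, F p = ∏ p ∈ s ×ˢ s with p.2 < p.1, F p := by
    refine (prod_subset (fun p => by simp +contextual [le_of_lt]) fun ⟨a, b⟩ hp hp' => ?_).symm
    simp only [mem_filter, mem_product, not_lt] at hp hp'
    obtain rfl : a = b := le_antisymm (not_lt.1 fun h => hp' ⟨hp.1, h⟩) hp.2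
    exact hdiag a hp.1.1
  have hswap : ∏ p ∈ s ×ˢ s with p.2 < p.1, F p = ∏ p ∈ ltPairs s, F p.swap :=
    prod_nbij' Prod.swap Prod.swap (by simp +contextual [mem_ltPairs])
      (by simp +contextual [mem_ltPairs]) (by simp) (by simp) (by simp)
  rw [← prod_filter_mul_prod_filter_not (s ×ˢ s) (fun p => p.1 < p.2), hgt, hswap,
    prod_mul_distrib, ltPairs]

theorem prod_ltPairs_eq_prod_Ioi [Fintype α] [LocallyFiniteOrderTop α] [CommMonoid β]
    (F : α × α → β) :
    ∏ p ∈ ltPairs (univ : Finset α), F p = ∏ i, ∏ j ∈ Ioi i, F (i, j) := by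
  simp only [ltPairs, prod_filter, prod_product, ← filter_lt_eq_Ioi]

theorem prod_ltPairs_image [LinearOrder β] {M : Type*} [CommMonoid M] {e : α → β}
    (he : StrictMono e) (F : β × β → M) :
    ∏ p ∈ ltPairs (s.image e), F p = ∏ p ∈ ltPairs s, F (e p.1, e p.2) := by
  have himage : ltPairs (s.image e) = (ltPairs s).image (Prod.map e e) := by
    ext ⟨x, y⟩
    simp only [mem_ltPairs, mem_image, Prod.exists, Prod.map, Prod.mk.injEq]
    constructor
    · rintro ⟨⟨a, ha, rfl⟩, ⟨b, hb, rfl⟩, hab⟩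
      exact ⟨a, b, ⟨ha, hb, he.lt_iff_lt.1 hab⟩, rfl, rfl⟩
    · rintro ⟨a, b, ⟨ha, hb, hab⟩, rfl, rfl⟩
      exact ⟨⟨a, ha, rfl⟩, ⟨b, hb, rfl⟩, he hab⟩
  rw [himage, prod_image fun p _ q _ h => (he.injective.prodMap he.injective) h]
  rfl

end LtPairs

theorem prod_ite_eq_pow_card_filter {ι M : Type*} [CommMonoid M] (s : Finset ι) (p : ι → Prop)
    [DecidablePred p] (a : M) : ∏ x ∈ s, (if p x then a else 1) = a ^ (s.filter p).card := by
  rw [prod_ite, prod_const, prod_const_one, mul_one]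

theorem Equiv.Perm.sign_eq_prod_ltPairs {α β : Type*} [LinearOrder α] [LinearOrder β] {k : ℕ}
    {s : Finset α} (hs : s.card = k) (σ : Perm (Fin k)) {f : α → β} {g : Fin k → β}
    (hg : StrictMono g) (hf : ∀ m, f (s.orderEmbOfFin hs m) = g (σ m)) :
    (Perm.sign σ : ℤ) = ∏ p ∈ ltPairs s, if f p.2 < f p.1 then -1 else 1 := by
  rw [← s.image_orderEmbOfFin_univ hs, prod_ltPairs_image (s.orderEmbOfFin hs).strictMono,
    prod_ltPairs_eq_prod_Ioi, Perm.sign_eq_prod_prod_Ioi]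
  push_cast
  refine prod_congr rfl fun i _ => prod_congr rfl fun j hj => ?_
  have hσ : σ i ≠ σ j := σ.injective.ne (mem_Ioi.1 hj).ne
  simp only [hf, hg.lt_iff_lt]
  split_ifs <;> first | rfl | omega

theorem apply_ne_of_fixed_on_inter {α : Type*} [DecidableEq α] {I J : Finset α} {π : α → α}
    (hinj : Set.InjOn π I) (hmaps : Set.MapsTo π I J) (hfix : ∀ i ∈ I ∩ J, π i = i)
    {a b : α} (ha : a ∈ I) (hb : b ∈ I) (hab : a ≠ b) : π a ≠ b := by
  intro h
  have hbJ : b ∈ J := h ▸ hmaps ha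
  exact hab (hinj ha hb (h.trans (hfix b (mem_inter.2 ⟨hb, hbJ⟩)).symm))

theorem neg_one_pow_xingCount (I : Finset ℕ) (π : ℕ → ℕ) :
    (-1 : ℤ) ^ xingCount I π =
      ∏ p ∈ ltPairs I,
        if ((p.1 : ℤ) - π p.2) * ((π p.2 : ℤ) - π p.1) * ((π p.1 : ℤ) - p.2) * ((p.2 : ℤ) - p.1) < 0
        then -1 else 1 := by
  rw [prod_ite_eq_pow_card_filter, ltPairs, filter_filter]
  rfl

theorem prod_neg_one_pow_sBetween (I : Finset ℕ) (π : ℕ → ℕ) :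
    ∏ i ∈ I, (-1 : ℤ) ^ sBetween I i (π i) =
      ∏ p ∈ ltPairs I,
        (if min p.1 (π p.1) < p.2 ∧ p.2 < max p.1 (π p.1) then -1 else 1) *
          (if min p.2 (π p.2) < p.1 ∧ p.1 < max p.2 (π p.2) then -1 else 1) := by
  calc ∏ i ∈ I, (-1 : ℤ) ^ sBetween I i (π i)
      = ∏ p ∈ I ×ˢ I, if min p.1 (π p.1) < p.2 ∧ p.2 < max p.1 (π p.1) then -1 else 1 := by
        rw [prod_product]
        exact prod_congr rfl fun i _ => (prod_ite_eq_pow_card_filter _ _ _).symm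
    _ = _ := prod_product_self_eq_prod_ltPairs _ fun a _ => if_neg (by omega)

theorem crossing_sign_eq (a b c d : ℕ) (hab : a < b) (hcd : c ≠ d) (hcb : c ≠ b) (hda : d ≠ a) :
    (if ((a : ℤ) - d) * ((d : ℤ) - c) * ((c : ℤ) - b) * ((b : ℤ) - a) < 0 then (-1 : ℤ) else 1) =
      (if d < c then -1 else 1) *
        ((if min a c < b ∧ b < max a c then -1 else 1) *
          (if min b d < a ∧ a < max b d then -1 else 1)) := by
  have hba : (0 : ℤ) < b - a := by omega
  simp only [show min a c < b ∧ b < max a c ↔ b < c by omega,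
    show min b d < a ∧ a < max b d ↔ d < a by omega,
    mul_neg_iff, mul_pos_iff, hba, hba.not_gt, and_true, and_false]
  split_ifs <;> norm_num at * <;> omega

theorem xing_parity_general (k : ℕ) (I J : Finset ℕ)
    (hI : I.card = k) (hJ : J.card = k)
    (π : ℕ → ℕ) (hbij : Set.BijOn π (I : Set ℕ) (J : Set ℕ))
    (hfix : ∀ i ∈ I ∩ J, π i = i)
    (σ : Equiv.Perm (Fin k))
    (hσ : ∀ m : Fin k, π ((I.orderIsoOfFin hI m : ℕ)) = (J.orderIsoOfFin hJ (σ m) : ℕ)) :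
    (-1 : ℤ) ^ xingCount I π =
      (Equiv.Perm.sign σ : ℤ) * ∏ i ∈ I, (-1 : ℤ) ^ sBetween I i (π i) := by
  have hinv := Perm.sign_eq_prod_ltPairs hI σ (J.orderEmbOfFin hJ).strictMono
    (f := π) fun m => by simpa only [coe_orderIsoOfFin_apply] using hσ m
  rw [neg_one_pow_xingCount, hinv, prod_neg_one_pow_sBetween, ← prod_mul_distrib]
  refine prod_congr rfl fun p hp => ?_
  obtain ⟨h₁, h₂, hlt⟩ := mem_ltPairs.1 hp
  have hne : ∀ {a b}, a ∈ I → b ∈ I → a ≠ b → π a ≠ b :=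
    apply_ne_of_fixed_on_inter hbij.injOn hbij.mapsTo hfix
  exact crossing_sign_eq _ _ _ _ hlt (hbij.injOn.ne h₁ h₂ hlt.ne) (hne h₁ h₂ hlt.ne)
    (hne h₂ h₁ hlt.ne')

/-- Lemma 4.2 of the paper: for a bijection `π : I → J` between two `k`-element
subsets of `[n]` fixing `I ∩ J`, with standardized permutation `σ ∈ S_k`,
`(-1)^{xing(π)} = (-1)^{inv(π)} ∏_{i ∈ I} (-1)^{s_{i, π(i)}}`. -/
theorem xing_parity (n k : ℕ) (I J : Finset ℕ)
    (hIn : I ⊆ Finset.Icc 1 n) (hJn : J ⊆ Finset.Icc 1 n)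
    (hI : I.card = k) (hJ : J.card = k)
    (π : ℕ → ℕ) (hbij : Set.BijOn π (I : Set ℕ) (J : Set ℕ))
    (hfix : ∀ i ∈ I ∩ J, π i = i)
    (σ : Equiv.Perm (Fin k))
    (hσ : ∀ m : Fin k, π ((I.orderIsoOfFin hI m : ℕ)) = (J.orderIsoOfFin hJ (σ m) : ℕ)) :
    (-1 : ℤ) ^ xingCount I π =
      (Equiv.Perm.sign σ : ℤ) * ∏ i ∈ I, (-1 : ℤ) ^ sBetween I i (π i) :=
  xing_parity_general k I J hI hJ π hbij hfix σ hσ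
end

section
/- If N is a finite directed graph with no directed cycles, then the minor Δ_{I,J}(M) of the weighted path matrix M on rows I and columns J equals Σ_π sgn(π) Σ_{P ∈ P_{I,J,π}} wt(P), the signed sum over families of pairwise vertex-disjoint paths joining I to J (Lindström–Gessel–Viennot lemma). -/
variable {V E : Type*}

/-- `es` is the edge list of a directed path from `i` to `j`. -/
def IsPath (src tgt : E → V) (es : List E) (i j : V) : Prop :=
  es.map src ++ [j] = i :: es.map tgt

/-- The list of vertices visited by a path starting at `i` with edge list `es`. -/
def pvisits (tgt : E → V) (i : V) (es : List E) : List V := i :: es.map tgt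

/-- The exponent (as a monomial) of the weight of the path with edge list `es`. -/
noncomputable def expOf [DecidableEq E] (es : List E) : E →₀ ℕ :=
  (es.map fun e => Finsupp.single e 1).sum

/-- The weighted path matrix: the `(i,j)` entry is `∑_{P : i ⇝ j} wt(P)`. -/
noncomputable def pathMatrix [DecidableEq E] (src tgt : E → V) (i j : V) :
    MvPowerSeries E ℝ :=
  fun d => (Nat.card {es : List E // IsPath src tgt es i j ∧ expOf es = d} : ℝ)

/-- The weight `∏_{e ∈ es} x_e` of a path, as a power series. -/
noncomputable def wtL (es : List E) : MvPowerSeries E ℝ :=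
  (es.map fun e => (MvPowerSeries.X e : MvPowerSeries E ℝ)).prod

/-- `(P₁, …, P_n) ∈ P_{I,J,π}`: a family of pairwise vertex-disjoint self-avoiding
paths with `P k : iI k ⇝ iJ (π k)`. -/
def IsPathFamily {n : ℕ} (src tgt : E → V) (iI iJ : Fin n → V)
    (π : Equiv.Perm (Fin n)) (P : Fin n → List E) : Prop :=
  (∀ k, IsPath src tgt (P k) (iI k) (iJ (π k))) ∧
  (∀ k, (pvisits tgt (iI k) (P k)).Nodup) ∧
  (∀ k k', k ≠ k' → ∀ v, v ∈ pvisits tgt (iI k) (P k) → v ∉ pvisits tgt (iI k') (P k'))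

/-!
Expanding the determinant and each entry `M i j = ∑_{P : i ⇝ j} wt P` (a finite sum, since in
an acyclic graph every path is self-avoiding) writes `det M` as the signed sum of `wt` over all
tuples `(π, P)` of paths `P k : I k ⇝ J (π k)`. Tuples that are not vertex-disjoint cancel in
pairs: take the least vertex `v` lying on two of the paths, the least and greatest indices
`k₀, k₁` of paths through `v`, and exchange the tails of `P k₀` and `P k₁` after `v`. This
preserves the weight, composes `π` with a transposition, and leaves `v`, `k₀`, `k₁` unchanged
(the multiset of visited vertices is preserved), so it is a sign-reversing involution.
-/

open Finset Function

def IsAcyclic (src tgt : E → V) : Prop :=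
  ∀ (v : V) (es : List E), es ≠ [] → ¬ IsPath src tgt es v v

section Paths

variable {src tgt : E → V} {es a b : List E} {i j v : V}

theorem isPath_nil : IsPath src tgt [] i j ↔ i = j := by
  simp [IsPath, eq_comm]

theorem isPath_cons {e : E} :
    IsPath src tgt (e :: es) i j ↔ src e = i ∧ IsPath src tgt es (tgt e) j := by
  simp [IsPath]

theorem isPath_append :
    IsPath src tgt (a ++ b) i j ↔ ∃ v, IsPath src tgt a i v ∧ IsPath src tgt b v j := by
  induction a generalizing i with
  | nil => simp [isPath_nil]
  | cons e a ih => simp only [List.cons_append, isPath_cons, ih]; grind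

theorem IsPath.right_unique {j' : V} (h : IsPath src tgt es i j) (h' : IsPath src tgt es i j') :
    j = j' := by
  simpa using h.trans h'.symm

theorem IsPath.mem_pvisits (h : IsPath src tgt es i j) : j ∈ pvisits tgt i es := by
  rw [pvisits, ← h]
  simp

theorem IsPath.exists_split_of_mem_pvisits (h : IsPath src tgt es i j)
    (hv : v ∈ pvisits tgt i es) :
    ∃ a b, a ++ b = es ∧ IsPath src tgt a i v ∧ IsPath src tgt b v j := by
  induction es generalizing i with
  | nil =>
    obtain rfl : v = i := by simpa [pvisits] using hv
    exact ⟨[], [], rfl, isPath_nil.2 rfl, h⟩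
  | cons e es ih =>
    obtain ⟨rfl, htl⟩ := isPath_cons.1 h
    obtain rfl | hv : v = src e ∨ v ∈ pvisits tgt (tgt e) es := by simpa [pvisits] using hv
    · exact ⟨[], e :: es, rfl, isPath_nil.2 rfl, h⟩
    · obtain ⟨a, b, rfl, ha, hb⟩ := ih htl hv
      exact ⟨e :: a, b, rfl, isPath_cons.2 ⟨rfl, ha⟩, hb⟩

theorem finite_setOf_nodup [Fintype E] : {l : List E | l.Nodup}.Finite :=
  Set.finite_coe_iff.1 (inferInstance : Finite {l : List E // l.Nodup})

variable (hac : IsAcyclic src tgt)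
include hac

theorem IsPath.nodup_pvisits (h : IsPath src tgt es i j) : (pvisits tgt i es).Nodup := by
  induction es generalizing i with
  | nil => simp [pvisits]
  | cons e es ih =>
    obtain ⟨rfl, htl⟩ := isPath_cons.1 h
    refine List.nodup_cons.2 ⟨fun hi => ?_, ih htl⟩
    obtain ⟨a, -, -, ha, -⟩ := htl.exists_split_of_mem_pvisits hi
    exact hac _ (e :: a) (List.cons_ne_nil _ _) (isPath_cons.2 ⟨rfl, ha⟩)

theorem IsPath.nodup (h : IsPath src tgt es i j) : es.Nodup :=
  (List.nodup_cons.1 (h.nodup_pvisits hac)).2.of_map _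

theorem eq_nil_of_isPath_append (h : IsPath src tgt (a ++ b) i v) (ha : IsPath src tgt a i v) :
    b = [] := by
  obtain ⟨w, hw, hb⟩ := isPath_append.1 h
  by_contra hne
  exact hac v b hne (hw.right_unique ha ▸ hb)

theorem append_inj_of_isPath {a' b' : List E} (heq : a ++ b = a' ++ b')
    (ha : IsPath src tgt a i v) (ha' : IsPath src tgt a' i v) : a = a' ∧ b = b' := by
  rcases List.append_eq_append_iff.1 heq with ⟨c, rfl, rfl⟩ | ⟨c, rfl, rfl⟩
  · obtain rfl := eq_nil_of_isPath_append hac ha' ha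
    simp
  · obtain rfl := eq_nil_of_isPath_append hac ha ha'
    simp

theorem finite_setOf_isPath [Fintype E] (i j : V) : {es | IsPath src tgt es i j}.Finite :=
  finite_setOf_nodup.subset fun _ h => h.nodup hac

end Paths

section Weights

variable {src tgt : E → V}

theorem wtL_append (a b : List E) : wtL (a ++ b) = wtL a * wtL b := by
  simp [wtL]

theorem wtL_eq_monomial [DecidableEq E] (es : List E) :
    wtL es = MvPowerSeries.monomial (expOf es) (1 : ℝ) := by
  induction es with
  | nil => simp [wtL, expOf]
  | cons e es ih =>
    have hexp : expOf (e :: es) = Finsupp.single e 1 + expOf es := by simp [expOf]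
    have hwt : wtL (e :: es) = MvPowerSeries.X e * wtL es := by simp [wtL]
    rw [hwt, ih, hexp, MvPowerSeries.X, MvPowerSeries.monomial_mul_monomial, one_mul]

theorem pathMatrix_eq_sum [DecidableEq E] {i j : V} (s : Finset (List E))
    (hs : ∀ es, es ∈ s ↔ IsPath src tgt es i j) :
    pathMatrix src tgt i j = ∑ es ∈ s, wtL es := by
  ext d
  simp_rw [map_sum, wtL_eq_monomial, MvPowerSeries.coeff_monomial, sum_boole]
  rw [MvPowerSeries.coeff_apply, pathMatrix, ← Nat.card_eq_finsetCard]
  exact congrArg _ (Nat.card_congr (Equiv.subtypeEquivRight fun es => by simp [hs, eq_comm]))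

end Weights

section Determinant

variable {ι : Type*}

def IsPathTuple (src tgt : E → V) (a b : ι → V) (σ : Equiv.Perm ι) (P : ι → List E) :
    Prop :=
  ∀ k, IsPath src tgt (P k) (a k) (b (σ k))

noncomputable def signedWeight [Fintype ι] [DecidableEq ι]
    (x : Equiv.Perm ι × (ι → List E)) : MvPowerSeries E ℝ :=
  ((Equiv.Perm.sign x.1 : ℤ) : MvPowerSeries E ℝ) * ∏ k, wtL (x.2 k)

variable [Fintype E] [Fintype ι] {src tgt : E → V} (hac : IsAcyclic src tgt) (a b : ι → V)
include hac

theorem finite_setOf_isPathTuple :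
    {x : Equiv.Perm ι × (ι → List E) | IsPathTuple src tgt a b x.1 x.2}.Finite :=
  (Set.finite_univ.prod (Set.Finite.pi' fun _ => finite_setOf_nodup)).subset
    fun _ hx => ⟨trivial, fun k => (hx k).nodup hac⟩

noncomputable def pathTuples : Finset (Equiv.Perm ι × (ι → List E)) :=
  (finite_setOf_isPathTuple hac a b).toFinset

@[simp]
theorem mem_pathTuples {x : Equiv.Perm ι × (ι → List E)} :
    x ∈ pathTuples hac a b ↔ IsPathTuple src tgt a b x.1 x.2 :=
  Set.Finite.mem_toFinset _

theorem det_pathMatrix_eq_sum [DecidableEq ι] [DecidableEq E] :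
    (Matrix.of fun k l => pathMatrix src tgt (a k) (b l)).det =
      ∑ x ∈ pathTuples hac a b, signedWeight x := by
  rw [← Matrix.det_transpose, Matrix.det_apply', sum_finset_product _ univ
    fun σ => Fintype.piFinset fun k => (finite_setOf_isPath hac (a k) (b (σ k))).toFinset]
  · refine sum_congr rfl fun σ _ => ?_
    have hrow : ∀ k, pathMatrix src tgt (a k) (b (σ k)) =
        ∑ es ∈ (finite_setOf_isPath hac (a k) (b (σ k))).toFinset, wtL es :=
      fun k => pathMatrix_eq_sum _ fun _ => Set.Finite.mem_toFinset _
    simp only [Matrix.transpose_apply, Matrix.of_apply, hrow, prod_univ_sum, mul_sum,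
      signedWeight]
  · intro x
    simp [IsPathTuple, Fintype.mem_piFinset]

end Determinant

section TailSwap

variable {ι : Type*} {src tgt : E → V}

theorem pvisits_append (i : V) (a b : List E) :
    pvisits tgt i (a ++ b) = pvisits tgt i a ++ b.map tgt := by
  simp [pvisits]

/-- Junk unless `es` visits `v`. -/
noncomputable def splitAt (src tgt : E → V) (i v : V) (es : List E) : List E × List E :=
  Classical.epsilon fun p => p.1 ++ p.2 = es ∧ IsPath src tgt p.1 i v

theorem splitAt_spec_of_append_eq {es a b : List E} {i v : V} (hes : a ++ b = es)
    (ha : IsPath src tgt a i v) :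
    (splitAt src tgt i v es).1 ++ (splitAt src tgt i v es).2 = es ∧
      IsPath src tgt (splitAt src tgt i v es).1 i v :=
  Classical.epsilon_spec (p := fun p : List E × _ => p.1 ++ p.2 = es ∧ IsPath src tgt p.1 i v)
    ⟨(a, b), hes, ha⟩

theorem IsPath.splitAt_spec {es : List E} {i j v : V} (h : IsPath src tgt es i j)
    (hv : v ∈ pvisits tgt i es) :
    (splitAt src tgt i v es).1 ++ (splitAt src tgt i v es).2 = es ∧
      IsPath src tgt (splitAt src tgt i v es).1 i v ∧
      IsPath src tgt (splitAt src tgt i v es).2 v j := by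
  obtain ⟨a, b, hab, ha, -⟩ := h.exists_split_of_mem_pvisits hv
  obtain ⟨hsplit, hfst⟩ := splitAt_spec_of_append_eq hab ha
  refine ⟨hsplit, hfst, ?_⟩
  obtain ⟨w, hw, hsnd⟩ := isPath_append.1 (hsplit ▸ h)
  rwa [hw.right_unique hfst] at hsnd

theorem splitAt_eq (hac : IsAcyclic src tgt) {es a b : List E} {i v : V} (hes : a ++ b = es)
    (ha : IsPath src tgt a i v) : splitAt src tgt i v es = (a, b) := by
  obtain ⟨hsplit, hfst⟩ := splitAt_spec_of_append_eq hes ha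
  obtain ⟨h₁, h₂⟩ := append_inj_of_isPath hac (hsplit.trans hes.symm) hfst ha
  exact Prod.ext h₁ h₂

variable [DecidableEq ι]

noncomputable def tailSwap (src tgt : E → V) (a : ι → V) (P : ι → List E) (k₀ k₁ : ι)
    (v : V) : ι → List E :=
  let p₀ := splitAt src tgt (a k₀) v (P k₀)
  let p₁ := splitAt src tgt (a k₁) v (P k₁)
  update (update P k₀ (p₀.1 ++ p₁.2)) k₁ (p₁.1 ++ p₀.2)

variable {a : ι → V} {P : ι → List E} {k₀ k₁ : ι} {v : V}

theorem tailSwap_apply_left (hk : k₀ ≠ k₁) :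
    tailSwap src tgt a P k₀ k₁ v k₀ =
      (splitAt src tgt (a k₀) v (P k₀)).1 ++ (splitAt src tgt (a k₁) v (P k₁)).2 := by
  simp [tailSwap, hk]

theorem tailSwap_apply_right :
    tailSwap src tgt a P k₀ k₁ v k₁ =
      (splitAt src tgt (a k₁) v (P k₁)).1 ++ (splitAt src tgt (a k₀) v (P k₀)).2 := by
  simp [tailSwap]

theorem tailSwap_apply_of_ne {k : ι} (h₀ : k ≠ k₀) (h₁ : k ≠ k₁) :
    tailSwap src tgt a P k₀ k₁ v k = P k := by
  simp [tailSwap, h₀, h₁]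

end TailSwap

section TailSwapTuple

variable {ι : Type*} [DecidableEq ι] {src tgt : E → V} {a b : ι → V} {σ : Equiv.Perm ι}
  {P : ι → List E} {k₀ k₁ : ι} {v : V}
  (hP : IsPathTuple src tgt a b σ P) (hk : k₀ ≠ k₁)
  (hv₀ : v ∈ pvisits tgt (a k₀) (P k₀)) (hv₁ : v ∈ pvisits tgt (a k₁) (P k₁))
include hP hk hv₀ hv₁

theorem IsPathTuple.tailSwap_perm :
    IsPathTuple src tgt a b (σ * Equiv.swap k₀ k₁) (tailSwap src tgt a P k₀ k₁ v) := by
  obtain ⟨-, ha₀, hb₀⟩ := (hP k₀).splitAt_spec hv₀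
  obtain ⟨-, ha₁, hb₁⟩ := (hP k₁).splitAt_spec hv₁
  intro k
  rw [Equiv.Perm.mul_apply]
  rcases eq_or_ne k k₀ with rfl | h₀
  · rw [tailSwap_apply_left hk, Equiv.swap_apply_left]
    exact isPath_append.2 ⟨v, ha₀, hb₁⟩
  rcases eq_or_ne k k₁ with rfl | h₁
  · rw [tailSwap_apply_right, Equiv.swap_apply_right]
    exact isPath_append.2 ⟨v, ha₁, hb₀⟩
  · rw [tailSwap_apply_of_ne h₀ h₁, Equiv.swap_apply_of_ne_of_ne h₀ h₁]
    exact hP k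

@[to_additive]
theorem IsPathTuple.prod_tailSwap [Fintype ι] {M : Type*} [CommMonoid M] (f : List E → M)
    (hf : ∀ l l', f (l ++ l') = f l * f l') :
    ∏ k, f (tailSwap src tgt a P k₀ k₁ v k) = ∏ k, f (P k) := by
  obtain ⟨h₀, -⟩ := (hP k₀).splitAt_spec hv₀
  obtain ⟨h₁, -⟩ := (hP k₁).splitAt_spec hv₁
  have hk₁ : k₁ ∈ univ.erase k₀ := mem_erase.2 ⟨hk.symm, mem_univ _⟩
  simp_rw [← mul_prod_erase univ _ (mem_univ k₀), ← mul_prod_erase _ _ hk₁]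
  rw [prod_congr rfl fun k hk => by
    rw [tailSwap_apply_of_ne (mem_erase.1 (mem_erase.1 hk).2).1 (mem_erase.1 hk).1]]
  rw [tailSwap_apply_left hk, tailSwap_apply_right]
  generalize splitAt src tgt (a k₀) v (P k₀) = p₀ at h₀
  generalize splitAt src tgt (a k₁) v (P k₁) = p₁ at h₁
  simp only [← h₀, ← h₁, hf]
  ac_rfl

theorem IsPathTuple.tailSwap_tailSwap (hac : IsAcyclic src tgt) :
    tailSwap src tgt a (tailSwap src tgt a P k₀ k₁ v) k₀ k₁ v = P := by
  obtain ⟨h₀, ha₀, -⟩ := (hP k₀).splitAt_spec hv₀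
  obtain ⟨h₁, ha₁, -⟩ := (hP k₁).splitAt_spec hv₁
  have hs₀ : splitAt src tgt (a k₀) v (tailSwap src tgt a P k₀ k₁ v k₀) =
      ((splitAt src tgt (a k₀) v (P k₀)).1, (splitAt src tgt (a k₁) v (P k₁)).2) :=
    splitAt_eq hac (tailSwap_apply_left hk).symm ha₀
  have hs₁ : splitAt src tgt (a k₁) v (tailSwap src tgt a P k₀ k₁ v k₁) =
      ((splitAt src tgt (a k₁) v (P k₁)).1, (splitAt src tgt (a k₀) v (P k₀)).2) :=
    splitAt_eq hac tailSwap_apply_right.symm ha₁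
  funext k
  rcases eq_or_ne k k₀ with rfl | hk₀
  · rw [tailSwap_apply_left hk, hs₀, hs₁, h₀]
  rcases eq_or_ne k k₁ with rfl | hk₁
  · rw [tailSwap_apply_right, hs₀, hs₁, h₁]
  · rw [tailSwap_apply_of_ne hk₀ hk₁, tailSwap_apply_of_ne hk₀ hk₁]

end TailSwapTuple

section Crossing

variable {ι : Type*} [Fintype ι] [DecidableEq V]

def pathsThrough (tgt : E → V) (a : ι → V) (P : ι → List E) (v : V) : Finset ι :=
  {k | v ∈ pvisits tgt (a k) (P k)}

def crossingVertices [Fintype V] (tgt : E → V) (a : ι → V) (P : ι → List E) : Finset V :=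
  {v | 1 < #(pathsThrough tgt a P v)}

variable {src tgt : E → V} {a b : ι → V}

@[simp]
theorem mem_pathsThrough {P : ι → List E} {v : V} {k : ι} :
    k ∈ pathsThrough tgt a P v ↔ v ∈ pvisits tgt (a k) (P k) :=
  mem_filter_univ _

@[simp]
theorem mem_crossingVertices [Fintype V] {P : ι → List E} {v : V} :
    v ∈ crossingVertices tgt a P ↔ 1 < #(pathsThrough tgt a P v) :=
  mem_filter_univ _

theorem card_pathsThrough_eq_sum_count {P : ι → List E}
    (h : ∀ k, (pvisits tgt (a k) (P k)).Nodup) (u : V) :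
    #(pathsThrough tgt a P u) = ∑ k, (pvisits tgt (a k) (P k)).count u := by
  rw [pathsThrough, card_filter]
  refine sum_congr rfl fun k _ => ?_
  split_ifs with hu
  exacts [(List.count_eq_one_of_mem (h k) hu).symm, (List.count_eq_zero.2 hu).symm]

variable [DecidableEq ι] {σ : Equiv.Perm ι} {P : ι → List E} {k₀ k₁ : ι} {v : V}
  (hP : IsPathTuple src tgt a b σ P) (hk : k₀ ≠ k₁)
  (hv₀ : v ∈ pvisits tgt (a k₀) (P k₀)) (hv₁ : v ∈ pvisits tgt (a k₁) (P k₁))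
include hP hk hv₀ hv₁

/-- Swapping tails permutes the visits of all paths as a multiset, and no path visits a vertex
twice. -/
theorem IsPathTuple.card_pathsThrough_tailSwap (hac : IsAcyclic src tgt) (u : V) :
    #(pathsThrough tgt a (tailSwap src tgt a P k₀ k₁ v) u) = #(pathsThrough tgt a P u) := by
  rw [card_pathsThrough_eq_sum_count fun k => (hP.tailSwap_perm hk hv₀ hv₁ k).nodup_pvisits hac,
    card_pathsThrough_eq_sum_count fun k => (hP k).nodup_pvisits hac]
  simp only [pvisits, List.count_cons, sum_add_distrib]
  congr 1
  exact hP.sum_tailSwap hk hv₀ hv₁ (fun es => (es.map tgt).count u) fun l l' => by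
    simp [List.count_append]

theorem IsPathTuple.pathsThrough_tailSwap :
    pathsThrough tgt a (tailSwap src tgt a P k₀ k₁ v) v = pathsThrough tgt a P v := by
  obtain ⟨-, ha₀, -⟩ := (hP k₀).splitAt_spec hv₀
  obtain ⟨-, ha₁, -⟩ := (hP k₁).splitAt_spec hv₁
  ext k
  rw [mem_pathsThrough, mem_pathsThrough]
  rcases eq_or_ne k k₀ with rfl | hk₀
  · rw [tailSwap_apply_left hk, pvisits_append]
    exact iff_of_true (List.mem_append_left _ ha₀.mem_pvisits) hv₀
  rcases eq_or_ne k k₁ with rfl | hk₁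
  · rw [tailSwap_apply_right, pvisits_append]
    exact iff_of_true (List.mem_append_left _ ha₁.mem_pvisits) hv₁
  · rw [tailSwap_apply_of_ne hk₀ hk₁]

end Crossing

section CrossingChoice

variable {ι : Type*} [Fintype ι] [Fintype V] [LinearOrder V] {tgt : E → V} {a : ι → V}
  {P Q : ι → List E}

noncomputable def crossingVertex (h : (crossingVertices tgt a P).Nonempty) : V :=
  (crossingVertices tgt a P).min' h

theorem one_lt_card_pathsThrough_crossingVertex (h : (crossingVertices tgt a P).Nonempty) :
    1 < #(pathsThrough tgt a P (crossingVertex h)) :=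
  mem_crossingVertices.1 (min'_mem _ h)

theorem crossingVertex_congr (hc : crossingVertices tgt a Q = crossingVertices tgt a P)
    (hQ : (crossingVertices tgt a Q).Nonempty) (hP : (crossingVertices tgt a P).Nonempty) :
    crossingVertex hQ = crossingVertex hP := by
  simp only [crossingVertex, hc]

theorem nonempty_pathsThrough_crossingVertex (h : (crossingVertices tgt a P).Nonempty) :
    (pathsThrough tgt a P (crossingVertex h)).Nonempty :=
  card_pos.1 (one_pos.trans (one_lt_card_pathsThrough_crossingVertex h))

variable [LinearOrder ι]

noncomputable def crossingPaths (h : (crossingVertices tgt a P).Nonempty) : ι × ι :=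
  ((pathsThrough tgt a P (crossingVertex h)).min' (nonempty_pathsThrough_crossingVertex h),
    (pathsThrough tgt a P (crossingVertex h)).max' (nonempty_pathsThrough_crossingVertex h))

theorem crossingPaths_fst_ne_snd (h : (crossingVertices tgt a P).Nonempty) :
    (crossingPaths h).1 ≠ (crossingPaths h).2 :=
  (min'_lt_max'_of_card _ (one_lt_card_pathsThrough_crossingVertex h)).ne

theorem crossingVertex_mem_pvisits_fst (h : (crossingVertices tgt a P).Nonempty) :
    crossingVertex h ∈ pvisits tgt (a (crossingPaths h).1) (P (crossingPaths h).1) :=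
  mem_pathsThrough.1 (min'_mem _ (nonempty_pathsThrough_crossingVertex h))

theorem crossingVertex_mem_pvisits_snd (h : (crossingVertices tgt a P).Nonempty) :
    crossingVertex h ∈ pvisits tgt (a (crossingPaths h).2) (P (crossingPaths h).2) :=
  mem_pathsThrough.1 (max'_mem _ (nonempty_pathsThrough_crossingVertex h))

theorem crossingPaths_congr (hc : crossingVertices tgt a Q = crossingVertices tgt a P)
    (hQ : (crossingVertices tgt a Q).Nonempty) (hP : (crossingVertices tgt a P).Nonempty)
    (ht : pathsThrough tgt a Q (crossingVertex hP) = pathsThrough tgt a P (crossingVertex hP)) :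
    crossingPaths hQ = crossingPaths hP := by
  simp only [crossingPaths, crossingVertex_congr hc hQ hP, ht]

end CrossingChoice

section Involution

variable {ι : Type*} [Fintype ι] [LinearOrder ι] [Fintype V] [LinearOrder V] {src tgt : E → V}
  {a b : ι → V}

noncomputable def crossingSwap (src tgt : E → V) (a : ι → V)
    (x : Equiv.Perm ι × (ι → List E)) (h : (crossingVertices tgt a x.2).Nonempty) :
    Equiv.Perm ι × (ι → List E) :=
  (x.1 * Equiv.swap (crossingPaths h).1 (crossingPaths h).2,
    tailSwap src tgt a x.2 (crossingPaths h).1 (crossingPaths h).2 (crossingVertex h))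

variable {x : Equiv.Perm ι × (ι → List E)} (h : (crossingVertices tgt a x.2).Nonempty)

theorem sign_crossingSwap :
    Equiv.Perm.sign (crossingSwap src tgt a x h).1 = -Equiv.Perm.sign x.1 := by
  rw [crossingSwap, Equiv.Perm.sign_mul, Equiv.Perm.sign_swap (crossingPaths_fst_ne_snd h),
    mul_neg_one]

theorem crossingSwap_ne : crossingSwap src tgt a x h ≠ x := fun heq =>
  crossingPaths_fst_ne_snd h (Equiv.swap_eq_one_iff.1 (mul_eq_left.1 (congrArg Prod.fst heq)))

variable (hx : IsPathTuple src tgt a b x.1 x.2)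
include hx

theorem isPathTuple_crossingSwap :
    IsPathTuple src tgt a b (crossingSwap src tgt a x h).1 (crossingSwap src tgt a x h).2 :=
  hx.tailSwap_perm (crossingPaths_fst_ne_snd h) (crossingVertex_mem_pvisits_fst h)
    (crossingVertex_mem_pvisits_snd h)

theorem prod_wtL_crossingSwap :
    ∏ k, wtL ((crossingSwap src tgt a x h).2 k) = ∏ k, wtL (x.2 k) :=
  hx.prod_tailSwap (crossingPaths_fst_ne_snd h) (crossingVertex_mem_pvisits_fst h)
    (crossingVertex_mem_pvisits_snd h) wtL wtL_append

variable (hac : IsAcyclic src tgt)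
include hac

theorem crossingVertices_crossingSwap :
    crossingVertices tgt a (crossingSwap src tgt a x h).2 = crossingVertices tgt a x.2 := by
  refine filter_congr fun u _ => ?_
  rw [crossingSwap, hx.card_pathsThrough_tailSwap (crossingPaths_fst_ne_snd h)
    (crossingVertex_mem_pvisits_fst h) (crossingVertex_mem_pvisits_snd h) hac u]

theorem crossingSwap_crossingSwap
    (h' : (crossingVertices tgt a (crossingSwap src tgt a x h).2).Nonempty) :
    crossingSwap src tgt a (crossingSwap src tgt a x h) h' = x := by
  have hk := crossingPaths_fst_ne_snd h
  have hv₀ := crossingVertex_mem_pvisits_fst h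
  have hv₁ := crossingVertex_mem_pvisits_snd h
  have hc := crossingVertices_crossingSwap h hx hac
  have hpaths := crossingPaths_congr hc h' h (hx.pathsThrough_tailSwap hk hv₀ hv₁)
  rw [crossingSwap, hpaths, crossingVertex_congr hc h' h]
  exact Prod.ext (by simp [crossingSwap, mul_assoc]) (hx.tailSwap_tailSwap hk hv₀ hv₁ hac)

end Involution

theorem sum_crossing_eq_zero {ι : Type*} [Fintype ι] [LinearOrder ι] [Fintype V]
    [LinearOrder V] [Fintype E] {src tgt : E → V} (hac : IsAcyclic src tgt) (a b : ι → V) :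
    ∑ x ∈ pathTuples hac a b with (crossingVertices tgt a x.2).Nonempty,
      signedWeight x = 0 := by
  have mem {x}
      (hx : x ∈ (pathTuples hac a b).filter fun x => (crossingVertices tgt a x.2).Nonempty) :
      IsPathTuple src tgt a b x.1 x.2 ∧ (crossingVertices tgt a x.2).Nonempty := by
    rwa [mem_filter, mem_pathTuples] at hx
  refine sum_involution (fun x hx => crossingSwap src tgt a x (mem hx).2) (fun x hx => ?_)
    (fun x hx _ => crossingSwap_ne _) (fun x hx => ?_)
    (fun x hx => crossingSwap_crossingSwap _ (mem hx).1 hac _)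
  · rw [signedWeight, signedWeight, prod_wtL_crossingSwap _ (mem hx).1, sign_crossingSwap,
      Units.val_neg, Int.cast_neg, neg_mul, add_neg_cancel]
  · simpa [crossingVertices_crossingSwap _ (mem hx).1 hac] using
      ⟨isPathTuple_crossingSwap _ (mem hx).1, (mem hx).2⟩

theorem isPathFamily_iff [Fintype V] [DecidableEq V] {src tgt : E → V} (hac : IsAcyclic src tgt)
    {n : ℕ} {iI iJ : Fin n → V} {σ : Equiv.Perm (Fin n)} {P : Fin n → List E} :
    IsPathFamily src tgt iI iJ σ P ↔
      IsPathTuple src tgt iI iJ σ P ∧ crossingVertices tgt iI P = ∅ := by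
  simp only [IsPathFamily, eq_empty_iff_forall_notMem, mem_crossingVertices, not_lt, card_le_one,
    mem_pathsThrough]
  constructor
  · rintro ⟨hT, -, hdisj⟩
    exact ⟨hT, fun v k hk k' hk' => by_contra fun hne => hdisj k k' hne v hk hk'⟩
  · rintro ⟨hT, hcross⟩
    exact ⟨hT, fun k => (hT k).nodup_pvisits hac,
      fun k k' hne v hk hk' => hne (hcross v k hk k' hk')⟩

/-- The Lindström–Gessel–Viennot lemma: for a finite directed graph with no
directed cycles, `Δ_{I,J}(M) = ∑_π sgn(π) ∑_{P ∈ P_{I,J,π}} wt(P)`. -/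
theorem lindstrom_gessel_viennot [Fintype V] [Fintype E] [LinearOrder V] [DecidableEq E]
    (src tgt : E → V)
    (hacyclic : ∀ (v : V) (es : List E), es ≠ [] → ¬ IsPath src tgt es v v)
    (n : ℕ) (I J : Finset V) (hI : I.card = n) (hJ : J.card = n) :
    (Matrix.of fun a b : Fin n =>
        pathMatrix src tgt (I.orderIsoOfFin hI a : V) (J.orderIsoOfFin hJ b : V)).det =
    ∑ᶠ F : {F : Equiv.Perm (Fin n) × (Fin n → List E) //
        IsPathFamily src tgt (fun k => (I.orderIsoOfFin hI k : V))
          (fun k => (J.orderIsoOfFin hJ k : V)) F.1 F.2},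
      ((Equiv.Perm.sign F.1.1 : ℤ) : MvPowerSeries E ℝ) * ∏ k, wtL (F.1.2 k) := by
  have hac : IsAcyclic src tgt := hacyclic
  rw [det_pathMatrix_eq_sum hac]
  set iI : Fin n → V := fun k => I.orderIsoOfFin hI k
  set iJ : Fin n → V := fun k => J.orderIsoOfFin hJ k
  calc
    _ = ∑ x ∈ pathTuples hac iI iJ with ¬(crossingVertices tgt iI x.2).Nonempty,
          signedWeight x := by
      rw [← sum_filter_not_add_sum_filter _ fun x => (crossingVertices tgt iI x.2).Nonempty,
        sum_crossing_eq_zero, add_zero]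
    _ = ∑ᶠ F : {F : Equiv.Perm (Fin n) × (Fin n → List E) //
          IsPathFamily src tgt iI iJ F.1 F.2}, signedWeight F.1 := by
      rw [finsum_subtype_eq_finsum_cond]
      refine (finsum_cond_eq_sum_of_cond_iff _ fun {x} _ => ?_).symm
      rw [mem_filter, mem_pathTuples, not_nonempty_iff_eq_empty, isPathFamily_iff hac]
end

section
/- Uniqueness of signs up to gauge: if N = (V,E) is a directed network on a closed orientable surface with boundary in which every vertex lies on a path between boundary vertices, and ε, ε' ∈ {±1}^E both satisfy B(N,{x_e}) = A(N,{ε_e x_e}) and B(N,{x_e}) = A(N,{ε'_e x_e}), then ε and ε' are gauge equivalent: there exists g ∈ ({±1})^{int(V)} with ε'_{(u,v)} = g_v^{-1} ε_{(u,v)} g_u for all edges (extending g by 1 on boundary vertices). -/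
/-! Both hypotheses give `ε` and `ε'` the same generating series of boundary paths. The sign of
a path depends only on its monomial, and only finitely many paths share a monomial, so comparing
coefficients shows that `ε` and `ε'` have equal products along every boundary path. Hence the
ratio `ε / ε'` has product `1` along every boundary path. Since every vertex `v` lies on such a
path, the product of the ratio along a path from a source to `v` does not depend on the path
(close both with a common path from `v` to the boundary); this potential is the gauge, and it
is `1` on the boundary. -/

variable {V E : Type*}

/-- The generic matrix entry `∑_{P : i ⇝ j} c(P) wt(P)` in `ℝ[[x_e : e ∈ E]]`. -/
noncomputable def wEntry [DecidableEq E] (src tgt : E → V) (c : List E → ℝ) (i j : V) :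
    MvPowerSeries E ℝ :=
  fun d => ∑ᶠ es : {es : List E // IsPath src tgt es i j ∧ expOf es = d}, c es.1

section Paths

variable {src tgt : E → V}

theorem isPath_nil_iff {i j : V} : IsPath src tgt [] i j ↔ i = j := by
  simp [IsPath, eq_comm]

theorem isPath_cons_iff {e : E} {es : List E} {i j : V} :
    IsPath src tgt (e :: es) i j ↔ src e = i ∧ IsPath src tgt es (tgt e) j := by
  simp [IsPath]

theorem IsPath.append {es₁ es₂ : List E} {i v j : V} (h₁ : IsPath src tgt es₁ i v)
    (h₂ : IsPath src tgt es₂ v j) : IsPath src tgt (es₁ ++ es₂) i j := by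
  induction es₁ generalizing i with
  | nil => rwa [isPath_nil_iff.1 h₁]
  | cons e es ih =>
    rw [isPath_cons_iff] at h₁
    exact isPath_cons_iff.2 ⟨h₁.1, ih h₁.2⟩

theorem IsPath.exists_split {es : List E} {i j v : V} (h : IsPath src tgt es i j)
    (hv : v ∈ pvisits tgt i es) :
    ∃ es₁ es₂, IsPath src tgt es₁ i v ∧ IsPath src tgt es₂ v j := by
  induction es generalizing i with
  | nil =>
    obtain rfl : v = i := List.mem_singleton.1 hv
    exact ⟨[], [], isPath_nil_iff.2 rfl, h⟩
  | cons e es ih =>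
    rw [isPath_cons_iff] at h
    rcases List.mem_cons.1 hv with rfl | hv
    · exact ⟨[], e :: es, isPath_nil_iff.2 rfl, isPath_cons_iff.2 h⟩
    · obtain ⟨es₁, es₂, h₁, h₂⟩ := ih h.2 hv
      exact ⟨e :: es₁, es₂, isPath_cons_iff.2 ⟨h.1, h₁⟩, h₂⟩

end Paths

section Monomials

variable [DecidableEq E]

theorem expOf_eq_toFinsupp (es : List E) : expOf es = Multiset.toFinsupp (es : Multiset E) := by
  induction es with
  | nil => rfl
  | cons e es ih =>
    rw [← Multiset.cons_coe, ← Multiset.singleton_add, Multiset.toFinsupp_add,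
      Multiset.toFinsupp_singleton, ← ih]
    simp [expOf]

theorem expOf_eq_expOf_iff_perm {es es' : List E} : expOf es = expOf es' ↔ es.Perm es' := by
  rw [expOf_eq_toFinsupp, expOf_eq_toFinsupp, Multiset.toFinsupp.injective.eq_iff,
    Multiset.coe_eq_coe]

instance finite_isPath_expOf_eq (src tgt : E → V) (i j : V) (es : List E) :
    Finite {es' : List E // IsPath src tgt es' i j ∧ expOf es' = expOf es} :=
  (es.permutations.finite_toSet.subset fun _ h =>
    List.mem_permutations.2 (expOf_eq_expOf_iff_perm.1 h.2)).to_subtype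

theorem prod_map_eq_of_expOf_eq {M : Type*} [CommMonoid M] (f : E → M) {es es' : List E}
    (h : expOf es = expOf es') : (es.map f).prod = (es'.map f).prod :=
  ((expOf_eq_expOf_iff_perm.1 h).map f).prod_eq

end Monomials

section Coefficients

variable [DecidableEq E] {src tgt : E → V}

theorem wEntry_apply_expOf {c : List E → ℝ}
    (hc : ∀ es es', expOf es = expOf es' → c es = c es') {i j : V} {es : List E} :
    wEntry src tgt c i j (expOf es) =
      Nat.card {es' : List E // IsPath src tgt es' i j ∧ expOf es' = expOf es} * c es := by
  have := Fintype.ofFinite {es' : List E // IsPath src tgt es' i j ∧ expOf es' = expOf es}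
  rw [wEntry, finsum_eq_sum_of_fintype, Finset.sum_congr rfl fun x _ => hc x.1 es x.2.2,
    Finset.sum_const, Finset.card_univ, Nat.card_eq_fintype_card, nsmul_eq_mul]

theorem apply_eq_of_wEntry_eq {c c' : List E → ℝ}
    (hc : ∀ es es', expOf es = expOf es' → c es = c es')
    (hc' : ∀ es es', expOf es = expOf es' → c' es = c' es') {i j : V}
    (h : wEntry src tgt c i j = wEntry src tgt c' i j) {es : List E}
    (hes : IsPath src tgt es i j) : c es = c' es := by
  have hcoeff := congrFun h (expOf es)
  rw [wEntry_apply_expOf hc, wEntry_apply_expOf hc'] at hcoeff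
  refine mul_left_cancel₀ ?_ hcoeff
  have : Nonempty {es' : List E // IsPath src tgt es' i j ∧ expOf es' = expOf es} :=
    ⟨⟨es, hes, rfl⟩⟩
  exact Nat.cast_ne_zero.2 Nat.card_pos.ne'

end Coefficients

section Gauge

variable {G : Type*} {src tgt : E → V} {I K : Set V}

theorem exists_potential_of_prod_eq_one [Group G] {δ : E → G}
    (hcover : ∀ v : V, ∃ i ∈ I, ∃ j ∈ K, ∃ es : List E,
      IsPath src tgt es i j ∧ v ∈ pvisits tgt i es)
    (hδ : ∀ i ∈ I, ∀ j ∈ K, ∀ es, IsPath src tgt es i j → (es.map δ).prod = 1) :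
    ∃ g : V → G, (∀ v ∈ K, g v = 1) ∧ ∀ e, g (tgt e) = g (src e) * δ e := by
  have hsplit (v : V) : ∃ i ∈ I, ∃ j ∈ K, ∃ es₁ es₂ : List E,
      IsPath src tgt es₁ i v ∧ IsPath src tgt es₂ v j := by
    obtain ⟨i, hi, j, hj, es, hes, hv⟩ := hcover v
    exact ⟨i, hi, j, hj, hes.exists_split hv⟩
  choose i hi j hj into out hinto hout using hsplit
  refine ⟨fun v => ((into v).map δ).prod, fun v hv => hδ _ (hi v) v hv _ (hinto v), fun e => ?_⟩
  -- Any two paths from `I` to `v` have the same product: close both with the same path to `K`.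
  have hwd {v i' : V} (hi' : i' ∈ I) {es : List E} (hes : IsPath src tgt es i' v) :
      (es.map δ).prod = ((into v).map δ).prod := by
    have h₁ := hδ i' hi' _ (hj v) _ (hes.append (hout v))
    have h₂ := hδ _ (hi v) _ (hj v) _ ((hinto v).append (hout v))
    rw [List.map_append, List.prod_append] at h₁ h₂
    exact mul_right_cancel (h₁.trans h₂.symm)
  have hedge : IsPath src tgt [e] (src e) (tgt e) := isPath_cons_iff.2 ⟨rfl, isPath_nil_iff.2 rfl⟩
  simpa using (hwd (hi (src e)) ((hinto (src e)).append hedge)).symm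

theorem exists_gauge_of_prod_eq [CommGroup G] {σ σ' : E → G}
    (hcover : ∀ v : V, ∃ i ∈ I, ∃ j ∈ K, ∃ es : List E,
      IsPath src tgt es i j ∧ v ∈ pvisits tgt i es)
    (hσ : ∀ i ∈ I, ∀ j ∈ K, ∀ es, IsPath src tgt es i j → (es.map σ).prod = (es.map σ').prod) :
    ∃ g : V → G, (∀ v ∈ K, g v = 1) ∧ ∀ e, σ' e = (g (tgt e))⁻¹ * σ e * g (src e) := by
  obtain ⟨g, hgK, hg⟩ := exists_potential_of_prod_eq_one (δ := fun e => σ e * (σ' e)⁻¹) hcover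
    fun i hi j hj es hes => by
      rw [List.prod_map_mul, hσ i hi j hj es hes, ← List.prod_map_mul]
      simp
  refine ⟨g, hgK, fun e => ?_⟩
  rw [hg]
  simp [mul_comm, mul_left_comm]

end Gauge

theorem sign_uniqueness_general [DecidableEq E] (src tgt : E → V)
    (K I : Finset V)
    (hcover : ∀ v : V, ∃ i ∈ I, ∃ j ∈ K, ∃ es : List E,
      IsPath src tgt es i j ∧ v ∈ pvisits tgt i es)
    (s : V → V → ℕ) (r : List E → ℤ)
    (ε ε' : E → ℝ)
    (hε : ∀ e, ε e = 1 ∨ ε e = -1) (hε' : ∀ e, ε' e = 1 ∨ ε' e = -1)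
    (hB : ∀ i ∈ I, ∀ j ∈ K,
      wEntry src tgt (fun es => (-1 : ℝ) ^ ((s i j : ℤ) + r es + 1)) i j =
        wEntry src tgt (fun es => (es.map ε).prod) i j)
    (hB' : ∀ i ∈ I, ∀ j ∈ K,
      wEntry src tgt (fun es => (-1 : ℝ) ^ ((s i j : ℤ) + r es + 1)) i j =
        wEntry src tgt (fun es => (es.map ε').prod) i j) :
    ∃ g : V → ℝ, (∀ v, g v = 1 ∨ g v = -1) ∧ (∀ v ∈ K, g v = 1) ∧
      ∀ e : E, ε' e = (g (tgt e))⁻¹ * ε e * g (src e) := by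
  set ι : ℤˣ →* ℝ := (Int.castRingHom ℝ : ℤ →* ℝ).comp (Units.coeHom ℤ)
  have hι : Function.Injective ι := fun u v h => Units.ext (Int.cast_injective h)
  have hlift (x : ℝ) (hx : x = 1 ∨ x = -1) : ∃ u, ι u = x := by
    rcases hx with rfl | rfl
    exacts [⟨1, map_one ι⟩, ⟨-1, by simp [ι]⟩]
  choose σ hσ using fun e => hlift _ (hε e)
  choose σ' hσ' using fun e => hlift _ (hε' e)
  have hpaths (i) (hi : i ∈ I) (j) (hj : j ∈ K) (es) (hes : IsPath src tgt es i j) :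
      (es.map σ).prod = (es.map σ').prod := by
    have := apply_eq_of_wEntry_eq (fun _ _ => prod_map_eq_of_expOf_eq ε)
      (fun _ _ => prod_map_eq_of_expOf_eq ε') ((hB i hi j hj).symm.trans (hB' i hi j hj)) hes
    apply hι
    simpa [map_list_prod, List.map_map, Function.comp_def, hσ, hσ'] using this
  obtain ⟨g, hgK, hg⟩ := exists_gauge_of_prod_eq (I := (I : Set V)) (K := (K : Set V)) hcover hpaths
  refine ⟨fun v => ι (g v), fun v => ?_, fun v hv => by simp [hgK v hv], fun e => ?_⟩
  · rcases Int.units_eq_one_or (g v) with h | h <;> simp [h, ι]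
  · rw [← hσ, ← hσ', hg, map_mul, map_mul, map_inv]

/-- Corollary 5.3 of the paper (uniqueness of signs up to gauge): if every vertex of
`N` lies on a directed path from a boundary source to a boundary vertex and
`ε, ε' ∈ {±1}^E` both satisfy `B(N, {x_e}) = A(N, {ε_e x_e})` and
`B(N, {x_e}) = A(N, {ε'_e x_e})`, then `ε` and `ε'` are gauge equivalent via a gauge
element with values in `{±1}`, equal to `1` on boundary vertices. -/
theorem sign_uniqueness [DecidableEq E] (src tgt : E → V)
    (K I : Finset V) (hIK : I ⊆ K)
    (hcover : ∀ v : V, ∃ i ∈ I, ∃ j ∈ K, ∃ es : List E,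
      IsPath src tgt es i j ∧ v ∈ pvisits tgt i es)
    (s : V → V → ℕ) (r : List E → ℤ)
    (ε ε' : E → ℝ)
    (hε : ∀ e, ε e = 1 ∨ ε e = -1) (hε' : ∀ e, ε' e = 1 ∨ ε' e = -1)
    (hB : ∀ i ∈ I, ∀ j ∈ K,
      wEntry src tgt (fun es => (-1 : ℝ) ^ ((s i j : ℤ) + r es + 1)) i j =
        wEntry src tgt (fun es => (es.map ε).prod) i j)
    (hB' : ∀ i ∈ I, ∀ j ∈ K,
      wEntry src tgt (fun es => (-1 : ℝ) ^ ((s i j : ℤ) + r es + 1)) i j =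
        wEntry src tgt (fun es => (es.map ε').prod) i j) :
    ∃ g : V → ℝ, (∀ v, g v = 1 ∨ g v = -1) ∧ (∀ v ∈ K, g v = 1) ∧
      ∀ e : E, ε' e = (g (tgt e))⁻¹ * ε e * g (src e) :=
  sign_uniqueness_general src tgt K I hcover s r ε ε' hε hε' hB hB'
end

section
/- If two weight assignments a, b: E → ℝ* on a directed network satisfy ∏_{e∈P} a_e = ∏_{e∈P} b_e for every directed path P between boundary vertices, and every vertex lies on some such path, then there is a function g: V → ℝ* with g ≡ 1 on boundary vertices such that b_{(u,v)} = g_v^{-1} a_{(u,v)} g_u for every edge (u,v) ∈ E. -/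
variable {V E : Type*}

/-!
Fix for every vertex `v` a path from the boundary to `v` and let `g v` be the ratio of the
`a`- and `b`-products along it. Any path from `v` back to the boundary completes two such paths
to boundary-to-boundary paths, so equal path products make this ratio independent of the chosen
path. Appending an edge `e` to the path chosen for `src e` then yields
`g (tgt e) = g (src e) * a e / b e`. Only the commutativity of `ℝˣ` matters.
-/

namespace IsPath

variable {src tgt : E → V}

lemma singleton (e : E) : IsPath src tgt [e] (src e) (tgt e) := rfl

lemma append_s13 {l₁ l₂ : List E} {i k j : V} (h₁ : IsPath src tgt l₁ i k)
    (h₂ : IsPath src tgt l₂ k j) : IsPath src tgt (l₁ ++ l₂) i j := by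
  unfold IsPath at *
  rw [List.map_append, List.append_assoc, h₂, ← List.singleton_append, ← List.append_assoc, h₁]
  simp

lemma exists_split_of_mem_pvisits_s13 : ∀ {l : List E} {i j v : V},
    IsPath src tgt l i j → v ∈ pvisits tgt i l →
    ∃ l₁ l₂, IsPath src tgt l₁ i v ∧ IsPath src tgt l₂ v j
  | [], i, j, v, hl, hv => by
    obtain rfl : j = i := by simpa [IsPath] using hl
    obtain rfl : v = j := by simpa [pvisits] using hv
    exact ⟨[], [], rfl, rfl⟩
  | e :: l, i, j, v, hl, hv => by
    obtain ⟨rfl, hrest⟩ : src e = i ∧ IsPath src tgt l (tgt e) j := by simpa [IsPath] using hl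
    rcases List.mem_cons.mp hv with rfl | hv
    · exact ⟨[], e :: l, rfl, hl⟩
    · obtain ⟨l₁, l₂, h₁, h₂⟩ :=
        exists_split_of_mem_pvisits_s13 hrest (hv : v ∈ pvisits tgt (tgt e) l)
      exact ⟨e :: l₁, l₂, (singleton e).append_s13 h₁, h₂⟩

end IsPath

section CommGroup

variable {G : Type*} [CommGroup G] {src tgt : E → V} {K : Set V}

lemma prod_map_eq_of_isPath_of_isPath {c : E → G}
    (hc : ∀ i ∈ K, ∀ j ∈ K, ∀ l, IsPath src tgt l i j → (l.map c).prod = 1)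
    {v i i' j : V} (hi : i ∈ K) (hi' : i' ∈ K) (hj : j ∈ K) {l l' t : List E}
    (hl : IsPath src tgt l i v) (hl' : IsPath src tgt l' i' v) (ht : IsPath src tgt t v j) :
    (l.map c).prod = (l'.map c).prod := by
  have h := hc i hi j hj _ (hl.append_s13 ht)
  have h' := hc i' hi' j hj _ (hl'.append_s13 ht)
  rw [List.map_append, List.prod_append] at h h'
  exact mul_right_cancel (h.trans h'.symm)

theorem exists_coboundary_of_prod_map_eq_one (c : E → G)
    (hin : ∀ v, ∃ i ∈ K, ∃ l, IsPath src tgt l i v)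
    (hout : ∀ v, ∃ j ∈ K, ∃ l, IsPath src tgt l v j)
    (hc : ∀ i ∈ K, ∀ j ∈ K, ∀ l, IsPath src tgt l i j → (l.map c).prod = 1) :
    ∃ g : V → G, (∀ v ∈ K, g v = 1) ∧ ∀ e, c e = g (tgt e) / g (src e) := by
  choose i hiK l hl using hin
  refine ⟨fun v => ((l v).map c).prod, fun v hv => hc _ (hiK v) v hv _ (hl v), fun e => ?_⟩
  obtain ⟨j, hj, t, ht⟩ := hout (tgt e)
  have h := prod_map_eq_of_isPath_of_isPath hc (hiK _) (hiK _) hj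
    ((hl (src e)).append_s13 (.singleton e)) (hl (tgt e)) ht
  rw [List.map_append, List.prod_append] at h
  simp [← h]

theorem exists_gauge_of_prod_map_eq (a b : E → G)
    (hin : ∀ v, ∃ i ∈ K, ∃ l, IsPath src tgt l i v)
    (hout : ∀ v, ∃ j ∈ K, ∃ l, IsPath src tgt l v j)
    (hprod : ∀ i ∈ K, ∀ j ∈ K, ∀ l, IsPath src tgt l i j → (l.map a).prod = (l.map b).prod) :
    ∃ g : V → G, (∀ v ∈ K, g v = 1) ∧ ∀ e, b e = (g (tgt e))⁻¹ * a e * g (src e) := by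
  have hc : ∀ i ∈ K, ∀ j ∈ K, ∀ l, IsPath src tgt l i j → (l.map (a / b)).prod = 1 := by
    intro i hi j hj l hl
    have := Multiset.prod_map_div (m := (l : Multiset E)) (f := a) (g := b)
    simp only [Multiset.map_coe, Multiset.prod_coe] at this
    rw [Pi.div_def, this, hprod i hi j hj l hl, div_self']
  obtain ⟨g, hK, hg⟩ := exists_coboundary_of_prod_map_eq_one (a / b) hin hout hc
  refine ⟨g, hK, fun e => ?_⟩
  have h := hg e
  rw [Pi.div_apply, div_eq_div_iff_mul_eq_mul] at h
  rw [mul_assoc, h, inv_mul_cancel_left]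

end CommGroup

/-- The combinatorial core of the gauge-uniqueness theorem: if `a, b : E → ℝ*`
have equal products along every directed path between boundary vertices, and every
vertex lies on some such path, then there is `g : V → ℝ*` with `g ≡ 1` on the
boundary vertices `K` such that `b_{(u,v)} = g_v⁻¹ a_{(u,v)} g_u` for every edge. -/
theorem gauge_from_path_products (src tgt : E → V) (K : Finset V)
    (hcover : ∀ v : V, ∃ i ∈ K, ∃ j ∈ K, ∃ es : List E,
      IsPath src tgt es i j ∧ v ∈ pvisits tgt i es)
    (a b : E → ℝ) (ha : ∀ e, a e ≠ 0) (hb : ∀ e, b e ≠ 0)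
    (hprod : ∀ i ∈ K, ∀ j ∈ K, ∀ es : List E, IsPath src tgt es i j →
      (es.map a).prod = (es.map b).prod) :
    ∃ g : V → ℝ, (∀ v, g v ≠ 0) ∧ (∀ v ∈ K, g v = 1) ∧
      ∀ e : E, b e = (g (tgt e))⁻¹ * a e * g (src e) := by
  have hin : ∀ v, ∃ i ∈ (K : Set V), ∃ l, IsPath src tgt l i v := fun v => by
    obtain ⟨i, hi, j, -, l, hl, hv⟩ := hcover v
    obtain ⟨l₁, -, h₁, -⟩ := hl.exists_split_of_mem_pvisits_s13 hv
    exact ⟨i, hi, l₁, h₁⟩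
  have hout : ∀ v, ∃ j ∈ (K : Set V), ∃ l, IsPath src tgt l v j := fun v => by
    obtain ⟨i, -, j, hj, l, hl, hv⟩ := hcover v
    obtain ⟨-, l₂, -, h₂⟩ := hl.exists_split_of_mem_pvisits_s13 hv
    exact ⟨j, hj, l₂, h₂⟩
  let a' : E → ℝˣ := fun e => Units.mk0 (a e) (ha e)
  let b' : E → ℝˣ := fun e => Units.mk0 (b e) (hb e)
  have hprod' : ∀ i ∈ (K : Set V), ∀ j ∈ (K : Set V), ∀ l, IsPath src tgt l i j →
      (l.map a').prod = (l.map b').prod := fun i hi j hj l hl => Units.ext <| by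
    simp only [← Units.coeHom_apply, map_list_prod, List.map_map]
    simpa [Function.comp_def, a', b'] using hprod i hi j hj l hl
  obtain ⟨g, hK, hg⟩ := exists_gauge_of_prod_map_eq a' b' hin hout hprod'
  refine ⟨fun v => g v, fun v => (g v).ne_zero, fun v hv => by simp [hK v hv], fun e => ?_⟩
  simpa [a', b'] using congrArg Units.val (hg e)
end
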